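/- Let P be a Poisson bivector on ℝⁿ. Suppose there exist smooth vector fields τ and τ̃ on ℝⁿ and a constant α ∈ ℝ such that L_τ²(P) = L_{τ̃}(P) + αP. Then L_τ(P) is a Poisson bivector which is automatically compatible with P, i.e. [L_τ(P), L_τ(P)] = 0 and [L_τ(P), P] = 0. -/

import Mathlib

open Matrix BigOperators
noncomputable section


/-- Partial derivative of a scalar function on ℝⁿ in the `k`-th coordinate direction. -/
def pd {n : ℕ} (k : Fin n) (f : (Fin n → ℝ) → ℝ) (x : Fin n → ℝ) : ℝ :=
  fderiv ℝ f x (Pi.single k 1)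

/-- A (smooth) bivector on ℝⁿ: a smooth field of antisymmetric matrices. -/
def IsBivector {n : ℕ} (P : (Fin n → ℝ) → Matrix (Fin n) (Fin n) ℝ) : Prop :=
  (∀ i j, ContDiff ℝ (⊤ : ℕ∞) fun x => P x i j) ∧ ∀ x, (P x)ᵀ = -P x

/-- A smooth vector field on ℝⁿ. -/
def IsVectorField {n : ℕ} (τ : (Fin n → ℝ) → (Fin n → ℝ)) : Prop :=
  ∀ i, ContDiff ℝ (⊤ : ℕ∞) fun x => τ x i

/-- Components of the Schouten bracket of two bivectors:
`[H,K]^{ijk} = -∑ₘ (K^{mk} ∂ₘH^{ij} + H^{mk} ∂ₘK^{ij} + cyclic permutations of (i,j,k))`. -/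
def schouten {n : ℕ} (H K : (Fin n → ℝ) → Matrix (Fin n) (Fin n) ℝ)
    (x : Fin n → ℝ) (i j k : Fin n) : ℝ :=
  -∑ m, (K x m k * pd m (fun y => H y i j) x + H x m k * pd m (fun y => K y i j) x
       + K x m i * pd m (fun y => H y j k) x + H x m i * pd m (fun y => K y j k) x
       + K x m j * pd m (fun y => H y k i) x + H x m j * pd m (fun y => K y k i) x)

/-- Lie derivative of a bivector along a vector field:
`(L_τ P)^{ij} = ∑ₖ (τ^k ∂ₖP^{ij} - P^{kj} ∂ₖτ^i - P^{ik} ∂ₖτ^j)`. -/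
def lieD {n : ℕ} (τ : (Fin n → ℝ) → (Fin n → ℝ))
    (P : (Fin n → ℝ) → Matrix (Fin n) (Fin n) ℝ)
    (x : Fin n → ℝ) : Matrix (Fin n) (Fin n) ℝ :=
  Matrix.of fun i j => ∑ k, (τ x k * pd k (fun y => P y i j) x
    - P x k j * pd k (fun y => τ y i) x - P x i k * pd k (fun y => τ y j) x)

/-- A Poisson bivector: a bivector whose Schouten bracket with itself vanishes. -/
def IsPoisson {n : ℕ} (P : (Fin n → ℝ) → Matrix (Fin n) (Fin n) ℝ) : Prop :=
  IsBivector P ∧ ∀ x i j k, schouten P P x i j k = 0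

/-- Two bivectors are compatible if their Schouten bracket vanishes. -/
def Compatible {n : ℕ} (P Q : (Fin n → ℝ) → Matrix (Fin n) (Fin n) ℝ) : Prop :=
  ∀ x i j k, schouten P Q x i j k = 0


section Toolbox
variable {n : ℕ}

lemma pd_congr {k : Fin n} {f g : (Fin n → ℝ) → ℝ} (h : ∀ y, f y = g y) (x : Fin n → ℝ) :
    pd k f x = pd k g x := by
  have : f = g := funext h
  rw [pd, pd, this]

lemma pd_const (k : Fin n) (c : ℝ) (x : Fin n → ℝ) : pd k (fun _ => c) x = 0 := by
  simp [pd]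

lemma pd_neg (k : Fin n) (f : (Fin n → ℝ) → ℝ) (x : Fin n → ℝ) :
    pd k (fun y => -f y) x = -pd k f x := by
  simp [pd, fderiv_neg]

lemma pd_add {k : Fin n} {f g : (Fin n → ℝ) → ℝ} {x : Fin n → ℝ}
    (hf : DifferentiableAt ℝ f x) (hg : DifferentiableAt ℝ g x) :
    pd k (fun y => f y + g y) x = pd k f x + pd k g x := by
  simp [pd, fderiv_fun_add hf hg]

lemma pd_sub {k : Fin n} {f g : (Fin n → ℝ) → ℝ} {x : Fin n → ℝ}
    (hf : DifferentiableAt ℝ f x) (hg : DifferentiableAt ℝ g x) :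
    pd k (fun y => f y - g y) x = pd k f x - pd k g x := by
  simp [pd, fderiv_fun_sub hf hg]

lemma pd_mul {k : Fin n} {f g : (Fin n → ℝ) → ℝ} {x : Fin n → ℝ}
    (hf : DifferentiableAt ℝ f x) (hg : DifferentiableAt ℝ g x) :
    pd k (fun y => f y * g y) x = pd k f x * g x + f x * pd k g x := by
  simp [pd, fderiv_fun_mul hf hg]; ring

lemma pd_smul {k : Fin n} (c : ℝ) {f : (Fin n → ℝ) → ℝ} {x : Fin n → ℝ}
    (hf : DifferentiableAt ℝ f x) :
    pd k (fun y => c * f y) x = c * pd k f x := by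
  simp [pd, fderiv_const_mul hf c]

lemma pd_sum {k : Fin n} {ι : Type*} (s : Finset ι) {f : ι → (Fin n → ℝ) → ℝ} {x : Fin n → ℝ}
    (hf : ∀ i ∈ s, DifferentiableAt ℝ (f i) x) :
    pd k (fun y => ∑ i ∈ s, f i y) x = ∑ i ∈ s, pd k (f i) x := by
  simp [pd, fderiv_fun_sum hf]

lemma contDiff_pd {k : Fin n} {f : (Fin n → ℝ) → ℝ} (hf : ContDiff ℝ (⊤ : ℕ∞) f) :
    ContDiff ℝ (⊤ : ℕ∞) (pd k f) := by
  have h1 : ContDiff ℝ (⊤ : ℕ∞) (fderiv ℝ f) := hf.fderiv_right (by norm_cast)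
  exact (ContinuousLinearMap.apply ℝ ℝ (Pi.single k 1 : Fin n → ℝ)).contDiff.comp h1

lemma pd_pd_comm {f : (Fin n → ℝ) → ℝ} (hf : ContDiff ℝ (⊤ : ℕ∞) f)
    (a b : Fin n) (x : Fin n → ℝ) : pd a (pd b f) x = pd b (pd a f) x := by
  have hsymm : IsSymmSndFDerivAt ℝ f x := by
    apply (hf.contDiffAt).isSymmSndFDerivAt
    rw [minSmoothness_of_isRCLikeNormedField]; norm_cast
  have hd : DifferentiableAt ℝ (fderiv ℝ f) x :=
    ((hf.fderiv_right (m := (⊤:ℕ∞)) (by norm_cast)).differentiable (by norm_cast)).differentiableAt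
  have key : ∀ v w : Fin n → ℝ, fderiv ℝ (fun y => fderiv ℝ f y v) x w
      = fderiv ℝ (fderiv ℝ f) x w v := by
    intro v w
    rw [fderiv_clm_apply hd (differentiableAt_const v)]
    simp
  show fderiv ℝ (fun y => fderiv ℝ f y (Pi.single b 1)) x (Pi.single a 1)
      = fderiv ℝ (fun y => fderiv ℝ f y (Pi.single a 1)) x (Pi.single b 1)
  rw [key, key, hsymm.eq]

lemma dAt {f : (Fin n → ℝ) → ℝ} (hf : ContDiff ℝ (⊤ : ℕ∞) f) (x : Fin n → ℝ) :
    DifferentiableAt ℝ f x := (hf.differentiable (by norm_cast)).differentiableAt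

/-- smooth entries -/
def SmE (H : (Fin n → ℝ) → Matrix (Fin n) (Fin n) ℝ) : Prop :=
  ∀ a b, ContDiff ℝ (⊤ : ℕ∞) fun y => H y a b

/-- entrywise skewness as functions -/
def SkewE (H : (Fin n → ℝ) → Matrix (Fin n) (Fin n) ℝ) : Prop :=
  ∀ y a b, H y b a = -H y a b

lemma sum_sum_of_symm (f g : Fin n → Fin n → ℝ)
    (hfg : ∀ m l, f m l + f l m = g m l + g l m) :
    ∑ m, ∑ l, f m l = ∑ m, ∑ l, g m l := by
  have h : ∑ m, ∑ l, (f m l + f l m) = ∑ m, ∑ l, (g m l + g l m) :=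
    Finset.sum_congr rfl fun m _ => Finset.sum_congr rfl fun l _ => hfg m l
  simp only [Finset.sum_add_distrib] at h
  rw [Finset.sum_comm (f := fun m l => f l m), Finset.sum_comm (f := fun m l => g l m)] at h
  linarith

end Toolbox

section Expand
variable {n : ℕ} {H K P : (Fin n → ℝ) → Matrix (Fin n) (Fin n) ℝ}
  {τ : (Fin n → ℝ) → (Fin n → ℝ)}

lemma lieD_eq (τ : (Fin n → ℝ) → (Fin n → ℝ)) (P : (Fin n → ℝ) → Matrix (Fin n) (Fin n) ℝ)
    (x : Fin n → ℝ) (a b : Fin n) :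
    lieD τ P x a b = ∑ l, (τ x l * pd l (fun y => P y a b) x
      - P x l b * pd l (fun y => τ y a) x - P x a l * pd l (fun y => τ y b) x) := rfl

lemma smE_lieD (hP : SmE P) (hτ : IsVectorField τ) : SmE (lieD τ P) := by
  intro a b
  have : (fun x => lieD τ P x a b) = fun x => ∑ l, (τ x l * pd l (fun y => P y a b) x
      - P x l b * pd l (fun y => τ y a) x - P x a l * pd l (fun y => τ y b) x) := rfl
  rw [this]
  apply ContDiff.sum
  intro l _
  exact (((hτ l).mul (contDiff_pd (hP a b))).sub ((hP l b).mul (contDiff_pd (hτ a)))).sub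
    ((hP a l).mul (contDiff_pd (hτ b)))

lemma skewE_of_bivector (h2 : ∀ x, (P x)ᵀ = -P x) : SkewE P := by
  intro y a b
  have := congrFun (congrFun (h2 y) a) b
  simpa [Matrix.transpose_apply] using this

lemma pd_skew (hP : SkewE P) (c a b : Fin n) (x : Fin n → ℝ) :
    pd c (fun y => P y b a) x = -pd c (fun y => P y a b) x := by
  rw [pd_congr (fun y => hP y a b) x, pd_neg]

lemma skewE_lieD (hP : SkewE P) : SkewE (lieD τ P) := by
  intro y a b
  rw [lieD_eq, lieD_eq, ← Finset.sum_neg_distrib]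
  refine Finset.sum_congr rfl fun l _ => ?_
  rw [pd_skew hP, hP y l a, hP y b l]
  ring

lemma smE_lieD_lieD (hP : SmE P) (hτ : IsVectorField τ) : SmE (lieD τ (lieD τ P)) :=
  smE_lieD (smE_lieD hP hτ) hτ

end Expand

section Expand2
variable {n : ℕ} {H K P : (Fin n → ℝ) → Matrix (Fin n) (Fin n) ℝ}
  {τ : (Fin n → ℝ) → (Fin n → ℝ)}

lemma pd_lieD (hP : SmE P) (hτ : IsVectorField τ) (m a b : Fin n) (x : Fin n → ℝ) :
    pd m (fun y => lieD τ P y a b) x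
    = ∑ l, (pd m (fun y => τ y l) x * pd l (fun y => P y a b) x
          + τ x l * pd m (pd l (fun y => P y a b)) x
          - (pd m (fun y => P y l b) x * pd l (fun y => τ y a) x
          + P x l b * pd m (pd l (fun y => τ y a)) x)
          - (pd m (fun y => P y a l) x * pd l (fun y => τ y b) x
          + P x a l * pd m (pd l (fun y => τ y b)) x)) := by
  have e : (fun y => lieD τ P y a b) = fun y => ∑ l, (τ y l * pd l (fun z => P z a b) y
      - P y l b * pd l (fun z => τ z a) y - P y a l * pd l (fun z => τ z b) y) := rfl
  rw [e, pd_sum Finset.univ (fun l _ => (((dAt (hτ l) x).fun_mul (dAt (contDiff_pd (hP a b)) x)).fun_sub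
      ((dAt (hP l b) x).fun_mul (dAt (contDiff_pd (hτ a)) x))).fun_sub
      ((dAt (hP a l) x).fun_mul (dAt (contDiff_pd (hτ b)) x)))]
  refine Finset.sum_congr rfl fun l _ => ?_
  rw [pd_sub (((dAt (hτ l) x).fun_mul (dAt (contDiff_pd (hP a b)) x)).fun_sub
        ((dAt (hP l b) x).fun_mul (dAt (contDiff_pd (hτ a)) x)))
      ((dAt (hP a l) x).fun_mul (dAt (contDiff_pd (hτ b)) x)),
    pd_sub ((dAt (hτ l) x).fun_mul (dAt (contDiff_pd (hP a b)) x))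
      ((dAt (hP l b) x).fun_mul (dAt (contDiff_pd (hτ a)) x)),
    pd_mul (dAt (hτ l) x) (dAt (contDiff_pd (hP a b)) x),
    pd_mul (dAt (hP l b) x) (dAt (contDiff_pd (hτ a)) x),
    pd_mul (dAt (hP a l) x) (dAt (contDiff_pd (hτ b)) x)]

lemma pd_schouten (hH : SmE H) (hK : SmE K) (m i j k : Fin n) (x : Fin n → ℝ) :
    pd m (fun y => schouten H K y i j k) x
    = -∑ l, (pd m (fun y => K y l k) x * pd l (fun y => H y i j) x
           + K x l k * pd m (pd l (fun y => H y i j)) x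
           + pd m (fun y => H y l k) x * pd l (fun y => K y i j) x
           + H x l k * pd m (pd l (fun y => K y i j)) x
           + pd m (fun y => K y l i) x * pd l (fun y => H y j k) x
           + K x l i * pd m (pd l (fun y => H y j k)) x
           + pd m (fun y => H y l i) x * pd l (fun y => K y j k) x
           + H x l i * pd m (pd l (fun y => K y j k)) x
           + pd m (fun y => K y l j) x * pd l (fun y => H y k i) x
           + K x l j * pd m (pd l (fun y => H y k i)) x
           + pd m (fun y => H y l j) x * pd l (fun y => K y k i) x
           + H x l j * pd m (pd l (fun y => K y k i)) x) := by
  have e : (fun y => schouten H K y i j k) = fun y => -∑ l,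
      (K y l k * pd l (fun z => H z i j) y + H y l k * pd l (fun z => K z i j) y
     + K y l i * pd l (fun z => H z j k) y + H y l i * pd l (fun z => K z j k) y
     + K y l j * pd l (fun z => H z k i) y + H y l j * pd l (fun z => K z k i) y) := rfl
  have dsum : ∀ l : Fin n, ∀ _ : l ∈ Finset.univ, DifferentiableAt ℝ (fun y =>
      K y l k * pd l (fun z => H z i j) y + H y l k * pd l (fun z => K z i j) y
     + K y l i * pd l (fun z => H z j k) y + H y l i * pd l (fun z => K z j k) y
     + K y l j * pd l (fun z => H z k i) y + H y l j * pd l (fun z => K z k i) y) x := by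
    intro l _
    exact ((((((dAt (hK l k) x).mul (dAt (contDiff_pd (hH i j)) x)).add
      ((dAt (hH l k) x).mul (dAt (contDiff_pd (hK i j)) x))).add
      ((dAt (hK l i) x).mul (dAt (contDiff_pd (hH j k)) x))).add
      ((dAt (hH l i) x).mul (dAt (contDiff_pd (hK j k)) x))).add
      ((dAt (hK l j) x).mul (dAt (contDiff_pd (hH k i)) x))).add
      ((dAt (hH l j) x).mul (dAt (contDiff_pd (hK k i)) x))
  have e2 : pd m (fun y => -∑ l,
      (K y l k * pd l (fun z => H z i j) y + H y l k * pd l (fun z => K z i j) y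
     + K y l i * pd l (fun z => H z j k) y + H y l i * pd l (fun z => K z j k) y
     + K y l j * pd l (fun z => H z k i) y + H y l j * pd l (fun z => K z k i) y)) x
      = -pd m (fun y => ∑ l,
      (K y l k * pd l (fun z => H z i j) y + H y l k * pd l (fun z => K z i j) y
     + K y l i * pd l (fun z => H z j k) y + H y l i * pd l (fun z => K z j k) y
     + K y l j * pd l (fun z => H z k i) y + H y l j * pd l (fun z => K z k i) y)) x := pd_neg _ _ _
  rw [e, e2, pd_sum Finset.univ dsum]
  refine neg_inj.mpr (Finset.sum_congr rfl fun l _ => ?_)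
  have d1 : DifferentiableAt ℝ (fun y => K y l k * pd l (fun z => H z i j) y) x :=
    (dAt (hK l k) x).mul (dAt (contDiff_pd (hH i j)) x)
  have d2 : DifferentiableAt ℝ (fun y => H y l k * pd l (fun z => K z i j) y) x :=
    (dAt (hH l k) x).mul (dAt (contDiff_pd (hK i j)) x)
  have d3 : DifferentiableAt ℝ (fun y => K y l i * pd l (fun z => H z j k) y) x :=
    (dAt (hK l i) x).mul (dAt (contDiff_pd (hH j k)) x)
  have d4 : DifferentiableAt ℝ (fun y => H y l i * pd l (fun z => K z j k) y) x :=
    (dAt (hH l i) x).mul (dAt (contDiff_pd (hK j k)) x)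
  have d5 : DifferentiableAt ℝ (fun y => K y l j * pd l (fun z => H z k i) y) x :=
    (dAt (hK l j) x).mul (dAt (contDiff_pd (hH k i)) x)
  have d6 : DifferentiableAt ℝ (fun y => H y l j * pd l (fun z => K z k i) y) x :=
    (dAt (hH l j) x).mul (dAt (contDiff_pd (hK k i)) x)
  rw [pd_add ((((d1.fun_add d2).fun_add d3).fun_add d4).fun_add d5) d6,
      pd_add (((d1.fun_add d2).fun_add d3).fun_add d4) d5,
      pd_add ((d1.fun_add d2).fun_add d3) d4,
      pd_add (d1.fun_add d2) d3,
      pd_add d1 d2,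
      pd_mul (dAt (hK l k) x) (dAt (contDiff_pd (hH i j)) x),
      pd_mul (dAt (hH l k) x) (dAt (contDiff_pd (hK i j)) x),
      pd_mul (dAt (hK l i) x) (dAt (contDiff_pd (hH j k)) x),
      pd_mul (dAt (hH l i) x) (dAt (contDiff_pd (hK j k)) x),
      pd_mul (dAt (hK l j) x) (dAt (contDiff_pd (hH k i)) x),
      pd_mul (dAt (hH l j) x) (dAt (contDiff_pd (hK k i)) x)]
  ring

end Expand2
lemma key_pt {n : ℕ} (A B : Fin n → Fin n → ℝ) (T : Fin n → ℝ)
    (dA dB : Fin n → Fin n → Fin n → ℝ) (dT : Fin n → Fin n → ℝ)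
    (ddA ddB : Fin n → Fin n → Fin n → Fin n → ℝ) (ddT : Fin n → Fin n → Fin n → ℝ)
    (hA : ∀ a b, A b a = -A a b) (hB : ∀ a b, B b a = -B a b)
    (hddAs : ∀ c d a b, ddA d c a b = ddA c d a b)
    (hddBs : ∀ c d a b, ddB d c a b = ddB c d a b)
    (hddAa : ∀ c d a b, ddA c d b a = -ddA c d a b)
    (hddBa : ∀ c d a b, ddB c d b a = -ddB c d a b)
    (hddTs : ∀ c d a, ddT d c a = ddT c d a)
    (i j kk m l : Fin n) :
    ((-((T m) * (((dB m l kk) * (dA l i j)) + ((B l kk) * (ddA m l i j)) + ((dA m l kk) * (dB l i j)) + ((A l kk) * (ddB m l i j)) + ((dB m l i) * (dA l j kk)) + ((B l i) * (ddA m l j kk)) + ((dA m l i) * (dB l j kk)) + ((A l i) * (ddB m l j kk)) + ((dB m l j) * (dA l kk i)) + ((B l j) * (ddA m l kk i)) + ((dA m l j) * (dB l kk i)) + ((A l j) * (ddB m l kk i))))) + ((((B l kk) * (dA l m j)) + ((A l kk) * (dB l m j)) + ((B l m) * (dA l j kk)) + ((A l m) * (dB l j kk)) + ((B l j) * (dA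 l kk m)) + ((A l j) * (dB l kk m))) * (dT m i)) + ((((B l kk) * (dA l i m)) + ((A l kk) * (dB l i m)) + ((B l i) * (dA l m kk)) + ((A l i) * (dB l m kk)) + ((B l m) * (dA l kk i)) + ((A l m) * (dB l kk i))) * (dT m j)) + ((((B l m) * (dA l i j)) + ((A l m) * (dB l i j)) + ((B l i) * (dA l j m)) + ((A l i) * (dB l j m)) + ((B l j) * (dA l m i)) + ((A l j) * (dB l m i))) * (dT m kk)))
    + ((-((T l) * (((dB l m kk) * (dA m i j)) + ((B m kk) * (ddA l m i j)) + ((dA l m kk) * (dB m i j)) + ((A m kk) * (ddB l m i j)) + ((dB l m i) * (dA m j kk)) + ((B m i) * (ddA l m j kk)) + ((dA l m i) * (dB m j kk)) + ((A m i) * (ddB l m j kk)) + ((dB l m j) * (dA m kk i)) + ((B m j) * (ddA l m kk i)) + ((dA l m j) * (dB m kk i)) + ((A m j) * (ddB l m kk i))))) + ((((B m kk) * (dA m l j)) + ((A m kk) * (dB m l j)) + ((B m l) * (dA m j kk)) + ((A m l) * (dB m j kk)) + ((B m j) * (dA m kk l)) + ((A m j) * (dB m kk l))) * (dT l i)) +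 ((((B m kk) * (dA m i l)) + ((A m kk) * (dB m i l)) + ((B m i) * (dA m l kk)) + ((A m i) * (dB m l kk)) + ((B m l) * (dA m kk i)) + ((A m l) * (dB m kk i))) * (dT l j)) + ((((B m l) * (dA m i j)) + ((A m l) * (dB m i j)) + ((B m i) * (dA m j l)) + ((A m i) * (dB m j l)) + ((B m j) * (dA m l i)) + ((A m j) * (dB m l i))) * (dT l kk)))
    = (-((((B m kk) * (((((dT m l) * (dA l i j)) + ((T l) * (ddA m l i j))) - (((dA m l j) * (dT l i)) + ((A l j) * (ddT m l i)))) - (((dA m i l) * (dT l j)) + ((A i l) * (ddT m l j))))) + (((((T l) * (dA l m kk)) - ((A l kk) * (dT l m))) - ((A m l) * (dT l kk))) * (dB m i j)) + ((B m i) * (((((dT m l) * (dA l j kk)) + ((T l) * (ddA m l j kk))) - (((dA m l kk) * (dT l j)) + ((A l kk) * (ddT m l j)))) - (((dA m j l) * (dT l kk)) + ((A j l) * (ddT m l kk))))) + (((((T l) * (dA l m i)) - ((A l i) * (dT l m))) - ((A m l) * (dT l i))) * (dB m j kk)) + ((B m j) * (((((dT m l) * (dA l kk i)) + ((T l) * (ddA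 m l kk i))) - (((dA m l i) * (dT l kk)) + ((A l i) * (ddT m l kk)))) - (((dA m kk l) * (dT l i)) + ((A kk l) * (ddT m l i))))) + (((((T l) * (dA l m j)) - ((A l j) * (dT l m))) - ((A m l) * (dT l j))) * (dB m kk i))) + ((((((T l) * (dB l m kk)) - ((B l kk) * (dT l m))) - ((B m l) * (dT l kk))) * (dA m i j)) + ((A m kk) * (((((dT m l) * (dB l i j)) + ((T l) * (ddB m l i j))) - (((dB m l j) * (dT l i)) + ((B l j) * (ddT m l i)))) - (((dB m i l) * (dT l j)) + ((B i l) * (ddT m l j))))) + (((((T l) * (dB l m i)) - ((B l i) * (dT l m))) - ((B m l) * (dT l i))) * (dA m j kk)) + ((A m i) * (((((dT m l) * (dB l j kk)) + ((T l) * (ddB m l j kk))) - (((dB m l kk) * (dT l j)) + ((B l kk) * (ddT m l j)))) - (((dB m j l) * (dT l kk)) + ((B j l) * (ddT m l kk))))) + (((((T l) * (dB l m j)) - ((B l j) * (dT l m))) - ((B m l) * (dT l j))) * (dA m kk i)) + ((A m j) * (((((dT m l) * (dB l kk i)) + ((T l) * (ddB m l kk i))) - (((dB m l i) * (dT l kk))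 + ((B l i) * (ddT m l kk)))) - (((dB m kk l) * (dT l i)) + ((B kk l) * (ddT m l i))))))))
    + (-((((B l kk) * (((((dT l m) * (dA m i j)) + ((T m) * (ddA l m i j))) - (((dA l m j) * (dT m i)) + ((A m j) * (ddT l m i)))) - (((dA l i m) * (dT m j)) + ((A i m) * (ddT l m j))))) + (((((T m) * (dA m l kk)) - ((A m kk) * (dT m l))) - ((A l m) * (dT m kk))) * (dB l i j)) + ((B l i) * (((((dT l m) * (dA m j kk)) + ((T m) * (ddA l m j kk))) - (((dA l m kk) * (dT m j)) + ((A m kk) * (ddT l m j)))) - (((dA l j m) * (dT m kk)) + ((A j m) * (ddT l m kk))))) + (((((T m) * (dA m l i)) - ((A m i) * (dT m l))) - ((A l m) * (dT m i))) * (dB l j kk)) + ((B l j) * (((((dT l m) * (dA m kk i)) + ((T m) * (ddA l m kk i))) - (((dA l m i) * (dT m kk)) + ((A m i) * (ddT l m kk)))) - (((dA l kk m) * (dT m i)) + ((A kk m) * (ddT l m i))))) + (((((T m) * (dA m l j)) - ((A m j) * (dT m l))) - ((A l m) * (dT m j))) * (dB l kk i))) + ((((((T m) * (dB m l kk)) -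 ((B m kk) * (dT m l))) - ((B l m) * (dT m kk))) * (dA l i j)) + ((A l kk) * (((((dT l m) * (dB m i j)) + ((T m) * (ddB l m i j))) - (((dB l m j) * (dT m i)) + ((B m j) * (ddT l m i)))) - (((dB l i m) * (dT m j)) + ((B i m) * (ddT l m j))))) + (((((T m) * (dB m l i)) - ((B m i) * (dT m l))) - ((B l m) * (dT m i))) * (dA l j kk)) + ((A l i) * (((((dT l m) * (dB m j kk)) + ((T m) * (ddB l m j kk))) - (((dB l m kk) * (dT m j)) + ((B m kk) * (ddT l m j)))) - (((dB l j m) * (dT m kk)) + ((B j m) * (ddT l m kk))))) + (((((T m) * (dB m l j)) - ((B m j) * (dT m l))) - ((B l m) * (dT m j))) * (dA l kk i)) + ((A l j) * (((((dT l m) * (dB m kk i)) + ((T m) * (ddB l m kk i))) - (((dB l m i) * (dT m kk)) + ((B m i) * (ddT l m kk)))) - (((dB l kk m) * (dT m i)) + ((B kk m) * (ddT l m i)))))))) := by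
  simp only [hA i l, hA i m, hA j l, hA j m, hA kk l, hA kk m, hB i l, hB i m, hB j l, hB j m, hB kk l, hB kk m, hddAa m l i kk, hddAs m l i j, hddAs m l j kk, hddAs m l kk i, hddBa m l i kk, hddBs m l i j, hddBs m l j kk, hddBs m l kk i, hddTs m l i, hddTs m l j, hddTs m l kk]
  ring


lemma pd_pd_skew {n : ℕ} {P : (Fin n → ℝ) → Matrix (Fin n) (Fin n) ℝ} (hP : SkewE P)
    (c d a b : Fin n) (x : Fin n → ℝ) :
    pd c (pd d (fun y => P y b a)) x = -pd c (pd d (fun y => P y a b)) x :=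
  calc pd c (pd d (fun y => P y b a)) x
      = pd c (fun y => -pd d (fun z => P z a b) y) x :=
        pd_congr (fun y => pd_skew hP d a b y) x
    _ = -pd c (pd d (fun y => P y a b)) x := pd_neg _ _ _

section Leibniz
variable {n : ℕ} {H K : (Fin n → ℝ) → Matrix (Fin n) (Fin n) ℝ}
  {τ : (Fin n → ℝ) → (Fin n → ℝ)}

lemma leibniz (hH1 : SmE H) (hH2 : SkewE H) (hK1 : SmE K) (hK2 : SkewE K)
    (hτ : IsVectorField τ) (x : Fin n → ℝ) (i j k : Fin n) :
    schouten (lieD τ H) K x i j k + schouten H (lieD τ K) x i j k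
    = ∑ m, (τ x m * pd m (fun y => schouten H K y i j k) x
        - schouten H K x m j k * pd m (fun y => τ y i) x
        - schouten H K x i m k * pd m (fun y => τ y j) x
        - schouten H K x i j m * pd m (fun y => τ y k) x) := by
  simp only [pd_schouten hH1 hK1]
  simp only [schouten]
  simp only [pd_lieD hH1 hτ, pd_lieD hK1 hτ]
  simp only [lieD_eq]
  simp only [Finset.mul_sum, Finset.sum_mul, mul_neg, neg_mul, neg_neg, sub_neg_eq_add,
    ← Finset.sum_neg_distrib, ← Finset.sum_add_distrib, ← Finset.sum_sub_distrib]
  refine sum_sum_of_symm _ _ fun m l => ?_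
  simp only [hH2 x i j,
    hH2 x i k,
    hH2 x j k,
    hH2 x i m,
    hH2 x j m,
    hH2 x k m,
    hH2 x i l,
    hH2 x j l,
    hH2 x k l,
    hH2 x m l,
    pd_skew hH2 m i j x,
    pd_skew hH2 m i k x,
    pd_skew hH2 m j k x,
    pd_skew hH2 m i m x,
    pd_skew hH2 m j m x,
    pd_skew hH2 m k m x,
    pd_skew hH2 m i l x,
    pd_skew hH2 m j l x,
    pd_skew hH2 m k l x,
    pd_skew hH2 m m l x,
    pd_skew hH2 l i j x,
    pd_skew hH2 l i k x,
    pd_skew hH2 l j k x,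
    pd_skew hH2 l i m x,
    pd_skew hH2 l j m x,
    pd_skew hH2 l k m x,
    pd_skew hH2 l i l x,
    pd_skew hH2 l j l x,
    pd_skew hH2 l k l x,
    pd_skew hH2 l m l x,
    hK2 x i j,
    hK2 x i k,
    hK2 x j k,
    hK2 x i m,
    hK2 x j m,
    hK2 x k m,
    hK2 x i l,
    hK2 x j l,
    hK2 x k l,
    hK2 x m l,
    pd_skew hK2 m i j x,
    pd_skew hK2 m i k x,
    pd_skew hK2 m j k x,
    pd_skew hK2 m i m x,
    pd_skew hK2 m j m x,
    pd_skew hK2 m k m x,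
    pd_skew hK2 m i l x,
    pd_skew hK2 m j l x,
    pd_skew hK2 m k l x,
    pd_skew hK2 m m l x,
    pd_skew hK2 l i j x,
    pd_skew hK2 l i k x,
    pd_skew hK2 l j k x,
    pd_skew hK2 l i m x,
    pd_skew hK2 l j m x,
    pd_skew hK2 l k m x,
    pd_skew hK2 l i l x,
    pd_skew hK2 l j l x,
    pd_skew hK2 l k l x,
    pd_skew hK2 l m l x,
    pd_pd_comm (hH1 i i) l m x,
    pd_pd_comm (hH1 i j) l m x,
    pd_pd_comm (hH1 i k) l m x,
    pd_pd_comm (hH1 j i) l m x,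
    pd_pd_comm (hH1 j j) l m x,
    pd_pd_comm (hH1 j k) l m x,
    pd_pd_comm (hH1 k i) l m x,
    pd_pd_comm (hH1 k j) l m x,
    pd_pd_comm (hH1 k k) l m x,
    pd_pd_skew hH2 m l i j x,
    pd_pd_skew hH2 m l i k x,
    pd_pd_skew hH2 m l j k x,
    pd_pd_comm (hK1 i i) l m x,
    pd_pd_comm (hK1 i j) l m x,
    pd_pd_comm (hK1 i k) l m x,
    pd_pd_comm (hK1 j i) l m x,
    pd_pd_comm (hK1 j j) l m x,
    pd_pd_comm (hK1 j k) l m x,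
    pd_pd_comm (hK1 k i) l m x,
    pd_pd_comm (hK1 k j) l m x,
    pd_pd_comm (hK1 k k) l m x,
    pd_pd_skew hK2 m l i j x,
    pd_pd_skew hK2 m l i k x,
    pd_pd_skew hK2 m l j k x,
    pd_pd_comm (hτ i) l m x,
    pd_pd_comm (hτ j) l m x,
    pd_pd_comm (hτ k) l m x]
  ring

end Leibniz

section Assembly
variable {n : ℕ} {A B P : (Fin n → ℝ) → Matrix (Fin n) (Fin n) ℝ}
  {τ : (Fin n → ℝ) → (Fin n → ℝ)}

lemma schouten_comm (A B : (Fin n → ℝ) → Matrix (Fin n) (Fin n) ℝ)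
    (x : Fin n → ℝ) (i j k : Fin n) :
    schouten A B x i j k = schouten B A x i j k := by
  simp only [schouten]
  exact neg_inj.mpr (Finset.sum_congr rfl fun m _ => by ring)

lemma schouten_shift (hA : SmE A) (hB : SmE B) (α : ℝ)
    (K : (Fin n → ℝ) → Matrix (Fin n) (Fin n) ℝ) (x : Fin n → ℝ) (i j k : Fin n) :
    schouten (fun y => A y + α • B y) K x i j k
    = schouten A K x i j k + α * schouten B K x i j k := by
  have e1 : ∀ a b : Fin n, (fun y => (A y + α • B y) a b) = fun y => A y a b + α * B y a b :=
    fun a b => rfl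
  have e2 : ∀ m a b : Fin n, pd m (fun y => A y a b + α * B y a b) x
      = pd m (fun y => A y a b) x + α * pd m (fun y => B y a b) x := fun m a b => by
    rw [pd_add (dAt (hA a b) x) ((dAt (hB a b) x).const_mul α), pd_smul α (dAt (hB a b) x)]
  simp only [schouten, e1, e2, Matrix.add_apply, Matrix.smul_apply, smul_eq_mul]
  rw [mul_neg, Finset.mul_sum, ← neg_add, ← Finset.sum_add_distrib]
  exact neg_inj.mpr (Finset.sum_congr rfl fun m _ => by ring)

lemma rhs_zero {H K : (Fin n → ℝ) → Matrix (Fin n) (Fin n) ℝ}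
    (σ : (Fin n → ℝ) → (Fin n → ℝ))
    (hz : ∀ y a b c, schouten H K y a b c = 0) (x : Fin n → ℝ) (i j k : Fin n) :
    (∑ m, (σ x m * pd m (fun y => schouten H K y i j k) x
        - schouten H K x m j k * pd m (fun y => σ y i) x
        - schouten H K x i m k * pd m (fun y => σ y j) x
        - schouten H K x i j m * pd m (fun y => σ y k) x)) = 0 := by
  refine Finset.sum_eq_zero fun m _ => ?_
  rw [pd_congr (fun y => hz y i j k) x, pd_const, hz x m j k, hz x i m k, hz x i j m]
  ring

end Assembly

lemma compat_lieD {n : ℕ} {P : (Fin n → ℝ) → Matrix (Fin n) (Fin n) ℝ}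
    (hP1 : SmE P) (hsk : SkewE P) (hPP : ∀ x i j k, schouten P P x i j k = 0)
    (σ : (Fin n → ℝ) → (Fin n → ℝ)) (hσ : IsVectorField σ) :
    ∀ x i j k, schouten (lieD σ P) P x i j k = 0 := by
  intro x i j k
  have hlb := leibniz hP1 hsk hP1 hsk hσ x i j k
  rw [rhs_zero σ hPP x i j k] at hlb
  have hcomm : schouten P (lieD σ P) x i j k = schouten (lieD σ P) P x i j k :=
    schouten_comm _ _ x i j k
  linarith

/-- if `L_τ²(P) = L_{τ̃}(P) + α P`, then `L_τ(P)` is a Poisson bivector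
automatically compatible with `P`. -/
theorem lie_deriv_poisson_of_second_lie_deriv {n : ℕ} (hn : 1 ≤ n)
    (P : (Fin n → ℝ) → Matrix (Fin n) (Fin n) ℝ) (hP : IsPoisson P)
    (τ τ' : (Fin n → ℝ) → (Fin n → ℝ)) (hτ : IsVectorField τ) (hτ' : IsVectorField τ')
    (α : ℝ) (h : ∀ x, lieD τ (lieD τ P) x = lieD τ' P x + α • P x) :
    IsPoisson (lieD τ P) ∧
      (∀ x i j k, schouten (lieD τ P) (lieD τ P) x i j k = 0) ∧
      (∀ x i j k, schouten (lieD τ P) P x i j k = 0) := by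
  obtain ⟨⟨hP1, hP2⟩, hPP⟩ := hP
  have hsk : SkewE P := skewE_of_bivector hP2
  have hQ1 : SmE (lieD τ P) := smE_lieD hP1 hτ
  have hQsk : SkewE (lieD τ P) := skewE_lieD hsk
  have hQP : ∀ x i j k, schouten (lieD τ P) P x i j k = 0 :=
    compat_lieD hP1 hsk hPP τ hτ
  have hQQ : ∀ x i j k, schouten (lieD τ P) (lieD τ P) x i j k = 0 := by
    intro x i j k
    have hlb := leibniz hQ1 hQsk hP1 hsk hτ x i j k
    rw [rhs_zero τ hQP x i j k] at hlb
    have e : lieD τ (lieD τ P) = fun y => lieD τ' P y + α • P y := funext h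
    rw [e, schouten_shift (smE_lieD hP1 hτ') hP1 α P x i j k,
      compat_lieD hP1 hsk hPP τ' hτ' x i j k, hPP x i j k] at hlb
    linarith
  have htr : ∀ x, (lieD τ P x)ᵀ = -lieD τ P x := by
    intro x
    ext a b
    rw [Matrix.transpose_apply, Matrix.neg_apply]
    exact hQsk x a b
  exact ⟨⟨⟨hQ1, htr⟩, hQQ⟩, hQQ, hQP⟩
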